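/- For every even natural number n, the sum a(0)+a(1)+⋯+a(n) of the first n+1 odious numbers equals n² + 3n/2 + 1 − t(n), where t(n) is the Thue–Morse sequence. -/

import Mathlib

/-- Sum of base-`d` digits of `n`. -/
def sdig (d n : ℕ) : ℕ := (Nat.digits d n).sum

/-- `t_d(n)`: base-`d` digit sum of `n`, reduced mod `d`. -/
def td (d n : ℕ) : ℕ := sdig d n % d

/-- `a_{j,d}(n)`: n-th natural (0-indexed, increasing) with base-`d` digit sum ≡ j mod d. -/
noncomputable def agen (d j n : ℕ) : ℕ := Nat.nth (fun k => sdig d k % d = j) n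

/-- n-th odious number (binary digit sum odd), 0-indexed increasing. -/
noncomputable def odious (n : ℕ) : ℕ := Nat.nth (fun k => (Nat.digits 2 k).sum % 2 = 1) n

/-- n-th evil number (binary digit sum even), 0-indexed increasing. -/
noncomputable def evil (n : ℕ) : ℕ := Nat.nth (fun k => (Nat.digits 2 k).sum % 2 = 0) n

/-- Thue–Morse sequence: parity of the binary digit sum. -/
def tm (n : ℕ) : ℕ := (Nat.digits 2 n).sum % 2

/-!
Each block `{2j, 2j + 1}` contains exactly one odious number, `2j` if `t(j) = 1` and `2j + 1`
otherwise, so the `k`-th odious number lies in the `k`-th block: `a(k) = 2k + 1 - t(k)`.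
Summing over `k ≤ n = 2m`, where `∑ t(k) = m + t(n)`, gives `(n + 1)² - m - t(n)`.
-/

open Finset

lemma tm_le_one (n : ℕ) : tm n ≤ 1 := Nat.le_of_lt_succ (Nat.mod_lt _ two_pos)

lemma tm_two_mul (n : ℕ) : tm (2 * n) = tm n := by
  rcases n.eq_zero_or_pos with rfl | hn
  · rfl
  · simpa [tm] using
      congrArg (fun l : List ℕ => l.sum % 2) (Nat.digits_add 2 one_lt_two 0 n two_pos (.inr hn.ne'))

lemma tm_two_mul_add_tm_two_mul_add_one (n : ℕ) : tm (2 * n) + tm (2 * n + 1) = 1 := by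
  have hdigits : Nat.digits 2 (2 * n + 1) = 1 :: Nat.digits 2 n := by
    rw [add_comm]; exact Nat.digits_add 2 one_lt_two 1 n one_lt_two (.inl one_ne_zero)
  rw [tm_two_mul, tm, tm, hdigits, List.sum_cons]
  omega

lemma sum_range_two_mul_tm (m : ℕ) : ∑ k ∈ range (2 * m), tm k = m := by
  induction m with
  | zero => rfl
  | succ m ih =>
    rw [mul_add_one, sum_range_succ, sum_range_succ, ih]
    have := tm_two_mul_add_tm_two_mul_add_one m
    omega

lemma count_tm_eq_one (n : ℕ) : Nat.count (tm · = 1) n = ∑ k ∈ range n, tm k := by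
  induction n with
  | zero => rfl
  | succ n ih =>
    rw [Nat.count_succ, sum_range_succ, ih]
    have := tm_le_one n
    split_ifs <;> omega

lemma odious_add_tm (k : ℕ) : odious k + tm k = 2 * k + 1 := by
  have hpair := tm_two_mul_add_tm_two_mul_add_one k
  have hcount : Nat.count (tm · = 1) (2 * k) = k := by
    rw [count_tm_eq_one, sum_range_two_mul_tm]
  change Nat.nth (tm · = 1) k + tm k = _
  rw [← tm_two_mul]
  obtain heven | hodd : tm (2 * k) = 1 ∨ tm (2 * k + 1) = 1 := by omega
  · have hnth := Nat.nth_count (p := (tm · = 1)) heven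
    rw [hcount] at hnth
    rw [hnth, heven]
  · have hnth := Nat.nth_count (p := (tm · = 1)) hodd
    rw [Nat.count_succ, hcount, if_neg (by omega), add_zero] at hnth
    rw [hnth]
    omega

lemma sum_range_two_mul_add_one (N : ℕ) : ∑ k ∈ range N, (2 * k + 1) = N ^ 2 := by
  induction N with
  | zero => rfl
  | succ N ih => rw [sum_range_succ, ih]; ring

theorem stmt9 (n : ℕ) (hn : Even n) :
    (2 * ∑ k ∈ Finset.range (n + 1), odious k : ℤ) =
      2 * n ^ 2 + 3 * n + 2 - 2 * tm n := by
  obtain ⟨m, rfl⟩ := hn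
  have hsum : ∑ k ∈ range (m + m + 1), (odious k + tm k) = (m + m + 1) ^ 2 := by
    simp_rw [odious_add_tm]
    exact sum_range_two_mul_add_one _
  have htm : ∑ k ∈ range (m + m + 1), tm k = m + tm (m + m) := by
    rw [sum_range_succ, ← two_mul, sum_range_two_mul_tm]
  rw [sum_add_distrib, htm] at hsum
  have hsumℤ := congrArg (Nat.cast : ℕ → ℤ) hsum
  push_cast at hsumℤ ⊢
  linear_combination 2 * hsumℤ
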